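/- Let C_{HL,c}(α) = sup over measurable sets E ⊆ ℝⁿ with 0 < |E| < ∞ of (1/|E|)·|{x ∈ ℝⁿ : M_{HL,c} χ_E(x) > α}|. Then C_{HL,c}(α) − 1 ∼_n (1/α − 1)^{1/n} as α → 1⁻; that is, there exist constants 0 < c ≤ C depending only on n and a threshold α₀ ∈ (0,1) such that for all α ∈ (α₀, 1), c·(1/α − 1)^{1/n} ≤ C_{HL,c}(α) − 1 ≤ C·(1/α − 1)^{1/n}. In particular lim_{α→1⁻} C_{HL,c}(α) = 1. -/

import Mathlib

open MeasureTheory Set Filter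
open scoped ENNReal

/-- The open axis-parallel cube with lower corner `a` and side length `h`. -/
def openCube {n : ℕ} (a : Fin n → ℝ) (h : ℝ) : Set (Fin n → ℝ) :=
  Set.univ.pi fun i => Set.Ioo (a i) (a i + h)

/-- The uncentered Hardy–Littlewood maximal operator with respect to open
axis-parallel cubes on `ℝⁿ`. -/
noncomputable def MHLc (n : ℕ) (f : (Fin n → ℝ) → ℝ≥0∞) (x : Fin n → ℝ) : ℝ≥0∞ :=
  ⨆ (a : Fin n → ℝ) (h : ℝ) (_ : 0 < h) (_ : x ∈ openCube a h),
    (∫⁻ y in openCube a h, f y) / volume (openCube a h)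

/-- The sharp Tauberian constant `C_{HL,c}(α)` of the uncentered
Hardy–Littlewood maximal operator with respect to cubes. -/
noncomputable def CHLc (n : ℕ) (α : ℝ) : ℝ≥0∞ :=
  ⨆ (E : Set (Fin n → ℝ)) (_ : MeasurableSet E) (_ : 0 < volume E)
    (_ : volume E < ⊤),
    volume {x : Fin n → ℝ | MHLc n (E.indicator 1) x > ENNReal.ofReal α}
      / volume E

/-!
Upper bound. In one dimension, the points lying in an interval on which `A` has density greater
than `θ` form a set of measure at most `(2 / θ - 1) |A|`: a minimal subcover of finitely many such
intervals covers every point at most twice, and each interval `I` satisfies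
`θ |I \ A| ≤ (1 - θ) |I ∩ A|`. Sweeping `E` with this one-dimensional maximal operator successively
along the `n` coordinate directions multiplies the measure by at most `((1 + d) / (1 - d)) ^ n`
(Fubini), and the swept set contains every cube `Q` with `|Q ∩ E| > (1 - d ^ n) |Q|`. This goes
by induction on the number of directions swept: if an `(m + 1)`-dimensional slice of `Q` has density
greater than `1 - d ^ (m + 1)` in `E`, a Chebyshev argument shows that more than a fraction `1 - d`
of its `m`-dimensional subslices have density greater than `1 - d ^ m`. With `d ^ n = 1 - α` this
gives `C_{HL,c}(α) ≤ 1 + 8 n d`.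

Lower bound. Let `E` be the union of the unit cubes whose lower corners lie on a bounded piece of
the hyperplane `∑ xᵢ = 0`, cut by the half-space `∑ xᵢ < n - ε`. Each of these cubes misses only a
corner of volume `ε ^ n < 1 - α`, so it lies in `{M χ_E > α}`. Together these cubes also cover a
piece of volume `ε` of the slab `n - ε < ∑ xᵢ < n` beyond the cut, while `|E|` is bounded in terms
of `n` only.
-/

namespace Solyanik

section OneDimensional

/-- The superlevel set `{M χ_A > θ}` of the one-dimensional uncentered maximal function. -/
def intervalMaximalSet (A : Set ℝ) (θ : ℝ) : Set ℝ :=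
  {t | ∃ a b, t ∈ Ioo a b ∧ ENNReal.ofReal (θ * (b - a)) < volume (A ∩ Ioo a b)}

lemma intervalMaximalSet_eq_iUnion (A : Set ℝ) (θ : ℝ) :
    intervalMaximalSet A θ = ⋃ p : {p : ℝ × ℝ //
      ENNReal.ofReal (θ * (p.2 - p.1)) < volume (A ∩ Ioo p.1 p.2)}, Ioo p.1.1 p.1.2 := by
  ext t
  simp only [intervalMaximalSet, mem_ofPred_eq, mem_iUnion, Subtype.exists, Prod.exists]
  grind

lemma mem_intervalMaximalSet_iff_exists_rat {A : Set ℝ} {θ t : ℝ} (hθ : 0 ≤ θ) :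
    t ∈ intervalMaximalSet A θ ↔ ∃ q r : ℚ, t ∈ Ioo (q : ℝ) r ∧
      ENNReal.ofReal (θ * (r - q)) < volume (A ∩ Ioo (q : ℝ) r) := by
  refine ⟨fun ⟨a, b, ⟨hat, htb⟩, hdense⟩ => ?_, fun ⟨q, r, ht, hdense⟩ => ⟨q, r, ht, hdense⟩⟩
  obtain ⟨c, -, hθc, hcA⟩ := ENNReal.lt_iff_exists_real_btwn.1 hdense
  rw [ENNReal.ofReal_lt_ofReal_iff'] at hθc
  obtain ⟨δ, hδ, hδc⟩ : ∃ δ > 0, θ * (b - a) + 2 * δ = c :=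
    ⟨(c - θ * (b - a)) / 2, by linarith [hθc.1], by ring⟩
  obtain ⟨q, haq, hqt⟩ := exists_rat_btwn (lt_min hat (lt_add_of_pos_right a hδ))
  obtain ⟨r, hrt, hrb⟩ := exists_rat_btwn (max_lt htb (sub_lt_self b hδ))
  rw [lt_min_iff] at hqt
  rw [max_lt_iff] at hrt
  have hθqr : θ * (r - q) ≤ θ * (b - a) := mul_le_mul_of_nonneg_left (by linarith) hθ
  refine ⟨q, r, ⟨hqt.1, hrt.1⟩, lt_of_not_ge fun hsmall => hcA.not_ge ?_⟩
  have hcover : A ∩ Ioo a b ⊆ (A ∩ Ioo (q : ℝ) r) ∪ (Ioc a q ∪ Ico (r : ℝ) b) := by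
    rintro x ⟨hxA, hax, hxb⟩
    by_cases hxq : x ≤ q
    · exact Or.inr (Or.inl ⟨hax, hxq⟩)
    by_cases hrx : (r : ℝ) ≤ x
    · exact Or.inr (Or.inr ⟨hrx, hxb⟩)
    exact Or.inl ⟨hxA, not_le.1 hxq, not_le.1 hrx⟩
  calc volume (A ∩ Ioo a b)
      ≤ volume (A ∩ Ioo (q : ℝ) r) + (volume (Ioc a (q : ℝ)) + volume (Ico (r : ℝ) b)) :=
        (measure_mono hcover).trans ((measure_union_le _ _).trans
          (add_le_add_right (measure_union_le _ _) _))
    _ ≤ ENNReal.ofReal (θ * (r - q)) + (ENNReal.ofReal (q - a) + ENNReal.ofReal (b - r)) := by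
        rw [Real.volume_Ioc, Real.volume_Ico]
        gcongr
    _ = ENNReal.ofReal (θ * (r - q) + ((q - a) + (b - r))) := by
        rw [ENNReal.ofReal_add (by nlinarith) (by linarith), ENNReal.ofReal_add (by linarith)
          (by linarith)]
    _ ≤ ENNReal.ofReal c := ENNReal.ofReal_le_ofReal (by linarith)

lemma isOpen_intervalMaximalSet (A : Set ℝ) (θ : ℝ) : IsOpen (intervalMaximalSet A θ) := by
  rw [intervalMaximalSet_eq_iUnion]
  exact isOpen_iUnion fun _ => isOpen_Ioo

lemma Ioo_subset_union_of_three {t : ℝ} {p q r : ℝ × ℝ} (hp : t ∈ Ioo p.1 p.2)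
    (hq : t ∈ Ioo q.1 q.2) (hr : t ∈ Ioo r.1 r.2) :
    Ioo p.1 p.2 ⊆ Ioo q.1 q.2 ∪ Ioo r.1 r.2 ∨ Ioo q.1 q.2 ⊆ Ioo p.1 p.2 ∪ Ioo r.1 r.2 ∨
      Ioo r.1 r.2 ⊆ Ioo p.1 p.2 ∪ Ioo q.1 q.2 := by
  have overlap {u v : ℝ × ℝ} (hu : t ∈ Ioo u.1 u.2) (hv : t ∈ Ioo v.1 v.2) :
      Ioo u.1 u.2 ∪ Ioo v.1 v.2 = Ioo (min u.1 v.1) (max u.2 v.2) :=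
    Ioo_union_Ioo (by grind) (by grind)
  rw [overlap hq hr, overlap hp hr, overlap hp hq]
  have : (min q.1 r.1 ≤ p.1 ∧ p.2 ≤ max q.2 r.2) ∨ (min p.1 r.1 ≤ q.1 ∧ q.2 ≤ max p.2 r.2) ∨
      (min p.1 q.1 ≤ r.1 ∧ r.2 ≤ max p.2 q.2) := by
    simp only [min_le_iff, le_max_iff]
    grind
  rcases this with h | h | h
  exacts [Or.inl (Ioo_subset_Ioo h.1 h.2), Or.inr (Or.inl (Ioo_subset_Ioo h.1 h.2)),
    Or.inr (Or.inr (Ioo_subset_Ioo h.1 h.2))]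

def IrredundantIoo (s : Finset (ℝ × ℝ)) : Prop :=
  ∀ p ∈ s, ¬ Ioo p.1 p.2 ⊆ ⋃ q ∈ s.erase p, Ioo q.1 q.2

lemma exists_irredundantIoo_subset (s : Finset (ℝ × ℝ)) :
    ∃ t ⊆ s, IrredundantIoo t ∧ ⋃ p ∈ t, Ioo p.1 p.2 = ⋃ p ∈ s, Ioo p.1 p.2 := by
  classical
  obtain ⟨t, ht, hmin⟩ := (s.powerset.filter fun t =>
      ⋃ p ∈ t, Ioo p.1 p.2 = ⋃ p ∈ s, Ioo p.1 p.2).exists_min_image Finset.card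
    ⟨s, by simp⟩
  simp only [Finset.mem_filter, Finset.mem_powerset] at ht hmin
  refine ⟨t, ht.1, fun p hp hcov => ?_, ht.2⟩
  have hunion : ⋃ q ∈ t.erase p, Ioo q.1 q.2 = ⋃ q ∈ t, Ioo q.1 q.2 := by
    conv_rhs => rw [← Finset.insert_erase hp]
    rw [Finset.set_biUnion_insert, union_eq_self_of_subset_left hcov]
  have := hmin (t.erase p) ⟨(Finset.erase_subset p t).trans ht.1, hunion.trans ht.2⟩
  exact (Finset.card_erase_lt_of_mem hp).not_ge this

lemma card_filter_mem_Ioo_le_two {s : Finset (ℝ × ℝ)} (hs : IrredundantIoo s) (t : ℝ) :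
    (s.filter fun p => t ∈ Ioo p.1 p.2).card ≤ 2 := by
  by_contra! h
  obtain ⟨p, hp, q, hq, r, hr, hpq, hpr, hqr⟩ := Finset.two_lt_card.1 h
  simp only [Finset.mem_filter] at hp hq hr
  have cover {u v w : ℝ × ℝ} (hv : v ∈ s) (hw : w ∈ s) (huv : u ≠ v) (huw : u ≠ w) :
      Ioo v.1 v.2 ∪ Ioo w.1 w.2 ⊆ ⋃ x ∈ s.erase u, Ioo x.1 x.2 :=
    union_subset (subset_biUnion_of_mem (u := fun x : ℝ × ℝ => Ioo x.1 x.2)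
      (Finset.mem_erase.2 ⟨huv.symm, hv⟩))
      (subset_biUnion_of_mem (u := fun x : ℝ × ℝ => Ioo x.1 x.2)
      (Finset.mem_erase.2 ⟨huw.symm, hw⟩))
  rcases Ioo_subset_union_of_three hp.2 hq.2 hr.2 with h | h | h
  · exact hs p hp.1 (h.trans (cover hq.1 hr.1 hpq hpr))
  · exact hs q hq.1 (h.trans (cover hp.1 hr.1 hpq.symm hqr))
  · exact hs r hr.1 (h.trans (cover hp.1 hq.1 hpr.symm hqr.symm))

lemma sum_volume_inter_Ioo_le_two_mul {s : Finset (ℝ × ℝ)} (hs : IrredundantIoo s) (X : Set ℝ) :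
    ∑ p ∈ s, volume (X ∩ Ioo p.1 p.2) ≤ 2 * volume X := by
  classical
  calc ∑ p ∈ s, volume (X ∩ Ioo p.1 p.2)
      = ∫⁻ t in X, ∑ p ∈ s, (Ioo p.1 p.2).indicator 1 t := by
        rw [lintegral_finsetSum _ fun p _ => measurable_one.indicator measurableSet_Ioo]
        refine Finset.sum_congr rfl fun p _ => ?_
        rw [lintegral_indicator_one measurableSet_Ioo, Measure.restrict_apply measurableSet_Ioo,
          inter_comm]
    _ ≤ ∫⁻ _ in X, 2 := by
        refine lintegral_mono fun t => ?_
        rw [Finset.sum_indicator_eq_sum_filter]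
        simpa using card_filter_mem_Ioo_le_two hs t
    _ = 2 * volume X := by rw [setLIntegral_const]

lemma ofReal_mul_volume_Ioo_diff_le {A : Set ℝ} (hA : MeasurableSet A) {θ a b : ℝ}
    (hθ0 : 0 ≤ θ) (hdense : ENNReal.ofReal (θ * (b - a)) < volume (A ∩ Ioo a b)) :
    ENNReal.ofReal θ * volume (Ioo a b \ A) ≤ ENNReal.ofReal (1 - θ) * volume (A ∩ Ioo a b) := by
  have hsplit := measure_inter_add_sdiff (μ := volume) (Ioo a b) hA
  rw [inter_comm, Real.volume_Ioo] at hsplit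
  have hin : volume (A ∩ Ioo a b) ≠ ⊤ := ne_top_of_le_ne_top ENNReal.ofReal_ne_top
    (hsplit ▸ le_self_add)
  have hout : volume (Ioo a b \ A) ≠ ⊤ := ne_top_of_le_ne_top ENNReal.ofReal_ne_top
    (hsplit ▸ le_add_self)
  have hab : a < b := by
    by_contra! hba
    simp [Ioo_eq_empty_of_le hba] at hdense
  have hsum : (volume (A ∩ Ioo a b)).toReal + (volume (Ioo a b \ A)).toReal = b - a := by
    rw [← ENNReal.toReal_add hin hout, hsplit, ENNReal.toReal_ofReal (by linarith)]
  rw [ENNReal.ofReal_lt_iff_lt_toReal (by positivity) hin] at hdense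
  calc ENNReal.ofReal θ * volume (Ioo a b \ A)
      = ENNReal.ofReal (θ * (volume (Ioo a b \ A)).toReal) := by
        rw [ENNReal.ofReal_mul hθ0, ENNReal.ofReal_toReal hout]
    _ ≤ ENNReal.ofReal ((1 - θ) * (volume (A ∩ Ioo a b)).toReal) :=
        ENNReal.ofReal_le_ofReal (by nlinarith)
    _ = ENNReal.ofReal (1 - θ) * volume (A ∩ Ioo a b) := by
        rw [ENNReal.ofReal_mul' ENNReal.toReal_nonneg, ENNReal.ofReal_toReal hin]

lemma ofReal_mul_volume_biUnion_Ioo_le {A : Set ℝ} (hA : MeasurableSet A) {θ : ℝ}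
    (hθ0 : 0 ≤ θ) (hθ1 : θ ≤ 1) {s : Finset (ℝ × ℝ)}
    (hs : ∀ p ∈ s, ENNReal.ofReal (θ * (p.2 - p.1)) < volume (A ∩ Ioo p.1 p.2)) :
    ENNReal.ofReal θ * volume (⋃ p ∈ s, Ioo p.1 p.2) ≤ ENNReal.ofReal (2 - θ) * volume A := by
  obtain ⟨t, hts, ht, hunion⟩ := exists_irredundantIoo_subset s
  rw [← hunion]
  have hcover : ⋃ p ∈ t, Ioo p.1 p.2 ⊆ A ∪ ⋃ p ∈ t, (Ioo p.1 p.2 \ A) := by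
    intro x hx
    by_cases hxA : x ∈ A
    · exact Or.inl hxA
    obtain ⟨p, hp, hxp⟩ := mem_iUnion₂.1 hx
    exact Or.inr (mem_biUnion hp ⟨hxp, hxA⟩)
  calc ENNReal.ofReal θ * volume (⋃ p ∈ t, Ioo p.1 p.2)
      ≤ ENNReal.ofReal θ * (volume A + ∑ p ∈ t, volume (Ioo p.1 p.2 \ A)) := by
        gcongr
        exact (measure_mono hcover).trans ((measure_union_le _ _).trans
          (add_le_add_right (measure_biUnion_finset_le _ _) _))
    _ ≤ ENNReal.ofReal θ * volume A +
          ENNReal.ofReal (1 - θ) * ∑ p ∈ t, volume (A ∩ Ioo p.1 p.2) := by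
        rw [mul_add, Finset.mul_sum, Finset.mul_sum]
        exact add_le_add le_rfl (Finset.sum_le_sum fun p hp =>
          ofReal_mul_volume_Ioo_diff_le hA hθ0 (hs p (hts hp)))
    _ ≤ ENNReal.ofReal θ * volume A + ENNReal.ofReal (1 - θ) * (2 * volume A) := by
        gcongr
        exact sum_volume_inter_Ioo_le_two_mul ht A
    _ = ENNReal.ofReal (2 - θ) * volume A := by
        rw [← mul_assoc, ← add_mul, ← ENNReal.ofReal_ofNat 2, ← ENNReal.ofReal_mul (by linarith),
          ← ENNReal.ofReal_add hθ0 (by linarith)]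
        ring_nf

theorem volume_intervalMaximalSet_le {A : Set ℝ} (hA : MeasurableSet A) {θ : ℝ}
    (hθ0 : 0 < θ) (hθ1 : θ ≤ 1) :
    volume (intervalMaximalSet A θ) ≤ ENNReal.ofReal ((2 - θ) / θ) * volume A := by
  rw [(isOpen_intervalMaximalSet A θ).measure_eq_iSup_isCompact]
  refine iSup_le fun K => iSup_le fun hKsub => iSup_le fun hK => ?_
  rw [intervalMaximalSet_eq_iUnion] at hKsub
  obtain ⟨t, hKt⟩ := hK.elim_finite_subcover _ (fun _ => isOpen_Ioo) hKsub
  classical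
  have hdense : ∀ p ∈ t.image Subtype.val,
      ENNReal.ofReal (θ * (p.2 - p.1)) < volume (A ∩ Ioo p.1 p.2) := by
    simp only [Finset.mem_image]
    rintro _ ⟨p, -, rfl⟩
    exact p.2
  have hbound := ofReal_mul_volume_biUnion_Ioo_le hA hθ0.le hθ1 hdense
  rw [Finset.set_biUnion_finset_image] at hbound
  rw [ENNReal.ofReal_div_of_pos hθ0, div_eq_mul_inv, mul_right_comm, ← div_eq_mul_inv,
    ENNReal.le_div_iff_mul_le (by simp [hθ0]) (by simp), mul_comm]
  exact (mul_le_mul_right (measure_mono hKt) _).trans hbound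

end OneDimensional

section Sweep

variable {ι : Type*} [DecidableEq ι]

lemma lintegral_indicator_one_update {T : Set (ι → ℝ)} (hT : MeasurableSet T) (x : ι → ℝ)
    (k : ι) : ∫⁻ t, T.indicator 1 (Function.update x k t) = volume (Function.update x k ⁻¹' T) :=
  lintegral_indicator_one (hT.preimage (measurable_update x))

lemma measurable_volume_update_preimage {T : Set (ι → ℝ)} (hT : MeasurableSet T) (k : ι) :
    Measurable fun x => volume (Function.update x k ⁻¹' T) := by
  convert (measurable_one.indicator hT).lmarginal (fun _ => volume) (s := {k}) using 1
  ext x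
  simp only [lmarginal_singleton]
  exact (lintegral_indicator_one_update hT x k).symm

lemma volume_le_of_volume_update_preimage_le [Fintype ι] {S T : Set (ι → ℝ)} (hS : MeasurableSet S)
    (hT : MeasurableSet T) (k : ι) {c : ℝ≥0∞}
    (h : ∀ y, volume (Function.update y k ⁻¹' T) ≤ c * volume (Function.update y k ⁻¹' S)) :
    volume T ≤ c * volume S := by
  have hS' : Measurable (S.indicator (1 : (ι → ℝ) → ℝ≥0∞)) := measurable_one.indicator hS
  calc volume T = ∫⁻ x, T.indicator 1 x ∂Measure.pi fun _ => volume :=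
        (lintegral_indicator_one hT).symm
    _ ≤ ∫⁻ x, c * S.indicator 1 x ∂Measure.pi fun _ => volume := by
        refine lintegral_le_of_lmarginal_le {k} (measurable_one.indicator hT)
          (hS'.const_mul c) fun y => ?_
        simp only [lmarginal_singleton]
        rw [lintegral_indicator_one_update hT,
          lintegral_const_mul c (f := fun t => S.indicator 1 (Function.update y k t))
            (hS'.comp (measurable_update y)), lintegral_indicator_one_update hS]
        exact h y
    _ = c * volume S := by
        rw [lintegral_const_mul c hS', lintegral_indicator_one hS]
        rfl

lemma volume_eq_of_volume_update_preimage_eq [Fintype ι] {S T : Set (ι → ℝ)}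
    (hS : MeasurableSet S) (hT : MeasurableSet T) (k : ι)
    (h : ∀ y, volume (Function.update y k ⁻¹' S) = volume (Function.update y k ⁻¹' T)) :
    volume S = volume T := by
  refine le_antisymm ?_ ?_
  · simpa using volume_le_of_volume_update_preimage_le (c := 1) hT hS k
      (fun y => by simpa using (h y).le)
  · simpa using volume_le_of_volume_update_preimage_le (c := 1) hS hT k
      (fun y => by simpa using (h y).ge)

/-- The superlevel set `{M_k χ_S > θ}` of the uncentered maximal operator along the `k`-th
coordinate lines. -/
def sweep (S : Set (ι → ℝ)) (k : ι) (θ : ℝ) : Set (ι → ℝ) :=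
  {x | x k ∈ intervalMaximalSet (Function.update x k ⁻¹' S) θ}

lemma update_preimage_sweep (S : Set (ι → ℝ)) (k : ι) (θ : ℝ) (y : ι → ℝ) :
    Function.update y k ⁻¹' sweep S k θ = intervalMaximalSet (Function.update y k ⁻¹' S) θ := by
  ext t
  have hupd : Function.update (Function.update y k t) k = Function.update y k :=
    funext fun _ => Function.update_idem _ _ _
  simp [sweep, hupd]

lemma measurableSet_sweep {S : Set (ι → ℝ)} (hS : MeasurableSet S) (k : ι) {θ : ℝ}
    (hθ : 0 ≤ θ) : MeasurableSet (sweep S k θ) := by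
  have hrat : sweep S k θ = ⋃ (q : ℚ) (r : ℚ), {x | x k ∈ Ioo (q : ℝ) r} ∩
      {x | ENNReal.ofReal (θ * (r - q)) <
        volume (Function.update x k ⁻¹' (S ∩ {y | y k ∈ Ioo (q : ℝ) r}))} := by
    ext x
    simp [sweep, mem_intervalMaximalSet_iff_exists_rat hθ, Ioo]
  rw [hrat]
  refine .iUnion fun q => .iUnion fun r => .inter (measurableSet_Ioo.preimage
    (measurable_pi_apply k)) (measurableSet_lt measurable_const
      (measurable_volume_update_preimage (hS.inter ?_) k))
  exact measurableSet_Ioo.preimage (measurable_pi_apply k)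

lemma volume_sweep_le [Fintype ι] {S : Set (ι → ℝ)} (hS : MeasurableSet S) (k : ι) {θ : ℝ}
    (hθ0 : 0 < θ) (hθ1 : θ ≤ 1) :
    volume (sweep S k θ) ≤ ENNReal.ofReal ((2 - θ) / θ) * volume S :=
  volume_le_of_volume_update_preimage_le hS (measurableSet_sweep hS k hθ0.le) k fun y => by
    rw [update_preimage_sweep]
    exact volume_intervalMaximalSet_le (hS.preimage (measurable_update y)) hθ0 hθ1

/-- The last direction of `l` is swept first. -/
def sweepAlong (θ : ℝ) (l : List ι) (E : Set (ι → ℝ)) : Set (ι → ℝ) :=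
  l.foldr (fun k S => sweep S k θ) E

lemma measurableSet_sweepAlong {E : Set (ι → ℝ)} (hE : MeasurableSet E) {θ : ℝ} (hθ : 0 ≤ θ)
    (l : List ι) : MeasurableSet (sweepAlong θ l E) := by
  induction l with
  | nil => exact hE
  | cons k l ih => exact measurableSet_sweep ih k hθ

lemma volume_sweepAlong_le [Fintype ι] {E : Set (ι → ℝ)} (hE : MeasurableSet E) {θ : ℝ}
    (hθ0 : 0 < θ) (hθ1 : θ ≤ 1) (l : List ι) :
    volume (sweepAlong θ l E) ≤ ENNReal.ofReal ((2 - θ) / θ) ^ l.length * volume E := by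
  induction l with
  | nil => simp [sweepAlong]
  | cons k l ih =>
    calc volume (sweepAlong θ (k :: l) E)
        ≤ ENNReal.ofReal ((2 - θ) / θ) * volume (sweepAlong θ l E) :=
          volume_sweep_le (measurableSet_sweepAlong hE hθ0.le l) k hθ0 hθ1
      _ ≤ ENNReal.ofReal ((2 - θ) / θ) ^ (k :: l).length * volume E := by
          rw [List.length_cons, pow_succ', mul_assoc]
          exact mul_le_mul_right ih _

end Sweep

section Slab

variable {ι : Type*} [Fintype ι] [DecidableEq ι]

def sumSlab (k : ι) (a b c₁ c₂ : ℝ) : Set (ι → ℝ) :=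
  univ.pi (Function.update (fun _ => Ioo a b) k univ) ∩ {x | ∑ i, x i ∈ Ioo c₁ c₂}

lemma measurableSet_pi_update (k : ι) (a b : ℝ) {I : Set ℝ} (hI : MeasurableSet I) :
    MeasurableSet (univ.pi (Function.update (fun _ => Ioo a b) k I)) :=
  .univ_pi fun i => by
    rcases eq_or_ne i k with rfl | hik
    · simpa using hI
    · simp [hik]

lemma measurableSet_sumSlab (k : ι) (a b c₁ c₂ : ℝ) : MeasurableSet (sumSlab k a b c₁ c₂) :=
  (measurableSet_pi_update k a b .univ).inter (measurableSet_Ioo.preimage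
    (Finset.univ.measurable_sum fun i _ => measurable_pi_apply i))

lemma volume_update_preimage_sumSlab (k : ι) (a b c₁ c₂ : ℝ) (y : ι → ℝ) :
    volume (Function.update y k ⁻¹' sumSlab k a b c₁ c₂) =
      volume (Function.update y k ⁻¹'
        univ.pi (Function.update (fun _ => Ioo a b) k (Ioo c₁ c₂))) := by
  by_cases hy : ∀ j ≠ k, y j ∈ Ioo a b
  · have hy' : ∀ {I : Set ℝ} (j : ι), j ≠ k → y j ∈ Function.update (fun _ => Ioo a b) k I j :=
      fun j hj => by simpa [hj] using hy j hj
    have hsum : ∀ t, ∑ i, Function.update y k t i = t + ∑ i ∈ Finset.univ \ {k}, y i :=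
      fun t => Finset.sum_update_of_mem (Finset.mem_univ k) y t
    simp only [sumSlab, preimage_inter, update_preimage_univ_pi (hy' (I := univ)),
      update_preimage_univ_pi (hy' (I := Ioo c₁ c₂)), Function.update_self, univ_inter]
    simp only [preimage_ofPred_eq, hsum]
    rw [← preimage_ofPred_eq (p := (· ∈ Ioo c₁ c₂)), ofPred_mem_eq, preimage_add_const_Ioo]
    simp [Real.volume_Ioo]
  · push Not at hy
    obtain ⟨j, hjk, hj⟩ := hy
    have hempty : ∀ {I : Set ℝ},
        Function.update y k ⁻¹' univ.pi (Function.update (fun _ => Ioo a b) k I) = ∅ :=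
      eq_empty_of_forall_notMem fun t ht => hj (by simpa [hjk] using ht j (mem_univ j))
    rw [sumSlab, preimage_inter, hempty, hempty, empty_inter]

lemma volume_sumSlab (k : ι) (a b c₁ c₂ : ℝ) :
    volume (sumSlab k a b c₁ c₂) =
      ENNReal.ofReal (c₂ - c₁) * ENNReal.ofReal (b - a) ^ (Fintype.card ι - 1) := by
  rw [volume_eq_of_volume_update_preimage_eq (measurableSet_sumSlab k a b c₁ c₂)
    (measurableSet_pi_update k a b measurableSet_Ioo) k
    (volume_update_preimage_sumSlab k a b c₁ c₂), volume_pi_pi]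
  simp_rw [Function.apply_update (fun _ => (volume : Measure ℝ))]
  rw [Finset.prod_update_of_mem (Finset.mem_univ k)]
  simp [Real.volume_Ioo, Finset.card_sdiff]

end Slab

section UpperBound

lemma lintegral_le_mul_measure_add_mul_measure_lt {α : Type*} [MeasurableSpace α]
    {μ : Measure α} {g : α → ℝ≥0∞} (hg : Measurable g) {J : Set α} (hJ : MeasurableSet J)
    {c M : ℝ≥0∞} (hcM : c ≤ M) (hgM : ∀ t, g t ≤ M) (hgJ : ∀ t ∉ J, g t = 0) :
    ∫⁻ t, g t ∂μ ≤ c * μ J + (M - c) * μ {t | c < g t} := by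
  calc ∫⁻ t, g t ∂μ
      ≤ ∫⁻ t, J.indicator (fun _ => c) t + {t | c < g t}.indicator (fun _ => M - c) t ∂μ := by
        refine lintegral_mono fun t => ?_
        by_cases hct : c < g t
        · have htJ : t ∈ J := by_contra fun htJ => by simp [hgJ t htJ] at hct
          simp [indicator_of_mem htJ, indicator_of_mem (show t ∈ {t | c < g t} from hct),
            add_tsub_cancel_of_le hcM, hgM t]
        by_cases htJ : t ∈ J
        · simpa [indicator_of_mem htJ] using le_add_right (not_lt.1 hct)
        · simp [hgJ t htJ]
    _ = c * μ J + (M - c) * μ {t | c < g t} := by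
        rw [lintegral_add_left (measurable_const.indicator hJ), lintegral_indicator_const hJ,
          lintegral_indicator_const (measurableSet_lt measurable_const hg)]

variable {n : ℕ}

lemma measurableSet_openCube (a : Fin n → ℝ) (h : ℝ) : MeasurableSet (openCube a h) :=
  .univ_pi fun _ => measurableSet_Ioo

lemma volume_openCube (a : Fin n → ℝ) {h : ℝ} (hh : 0 ≤ h) :
    volume (openCube a h) = ENNReal.ofReal (h ^ n) := by
  simp [openCube, Real.volume_pi_Ioo, ENNReal.ofReal_pow hh]

lemma lmarginal_indicator_le_pow {F : Set (Fin n → ℝ)} {a : Fin n → ℝ} {h : ℝ} (hh : 0 ≤ h)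
    (hF : F ⊆ openCube a h) (s : Finset (Fin n)) (x : Fin n → ℝ) :
    (∫⋯∫⁻_s, F.indicator 1 ∂fun _ => volume) x ≤ ENNReal.ofReal (h ^ s.card) := by
  calc (∫⋯∫⁻_s, F.indicator 1 ∂fun _ => volume) x
      ≤ ∫⁻ y, (univ.pi fun i : s => Ioo (a i) (a i + h)).indicator 1 y
          ∂Measure.pi fun _ => volume := by
        refine lintegral_mono fun y => ?_
        by_cases hy : Function.updateFinset x s y ∈ F
        · have hbox : y ∈ univ.pi fun i : s => Ioo (a i) (a i + h) := fun i _ => by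
            simpa [Function.updateFinset_def] using hF hy i (mem_univ _)
          simp [indicator_of_mem hy, indicator_of_mem hbox]
        · simp [indicator_of_notMem hy]
    _ = ENNReal.ofReal (h ^ s.card) := by
        rw [lintegral_indicator_one (.univ_pi fun _ => measurableSet_Ioo), Measure.pi_pi]
        simp [ENNReal.ofReal_pow hh]

lemma lmarginal_indicator_eq_zero {F : Set (Fin n → ℝ)} {a : Fin n → ℝ} {h : ℝ}
    (hF : F ⊆ openCube a h) {s : Finset (Fin n)} {k : Fin n} (hk : k ∉ s) {x : Fin n → ℝ}
    (hx : x k ∉ Ioo (a k) (a k + h)) : (∫⋯∫⁻_s, F.indicator 1 ∂fun _ => volume) x = 0 := by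
  have hzero : ∀ y, F.indicator (1 : (Fin n → ℝ) → ℝ≥0∞) (Function.updateFinset x s y) = 0 :=
    fun y =>
    indicator_of_notMem (fun hy => hx (by
      simpa [Function.updateFinset_def, hk] using hF hy k (mem_univ k))) 1
  exact (lintegral_congr hzero).trans lintegral_zero

lemma ofReal_mul_lt_measure_setOf_lt {α : Type*} [MeasurableSpace α] {μ : Measure α}
    {g : α → ℝ≥0∞} (hg : Measurable g) {J : Set α} (hJ : MeasurableSet J) {d h : ℝ}
    (hd0 : 0 ≤ d) (hd1 : d ≤ 1) (hh : 0 ≤ h) {m : ℕ} (hJh : μ J ≤ ENNReal.ofReal h)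
    (hgM : ∀ t, g t ≤ ENNReal.ofReal (h ^ m)) (hgJ : ∀ t ∉ J, g t = 0)
    (hlt : ENNReal.ofReal ((1 - d ^ (m + 1)) * h ^ (m + 1)) < ∫⁻ t, g t ∂μ) :
    ENNReal.ofReal ((1 - d) * h) < μ {t | ENNReal.ofReal ((1 - d ^ m) * h ^ m) < g t} := by
  have hdm : 0 ≤ 1 - d ^ m := sub_nonneg.2 (pow_le_one₀ hd0 hd1)
  have hhm : 0 ≤ h ^ m := pow_nonneg hh m
  have hbound := lintegral_le_mul_measure_add_mul_measure_lt (μ := μ) hg hJ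
    (c := ENNReal.ofReal ((1 - d ^ m) * h ^ m))
    (ENNReal.ofReal_le_ofReal (by nlinarith [pow_nonneg hd0 m])) hgM hgJ
  rw [← ENNReal.ofReal_sub _ (mul_nonneg hdm hhm),
    show h ^ m - (1 - d ^ m) * h ^ m = d ^ m * h ^ m by ring] at hbound
  by_contra! hsmall
  refine hlt.not_ge (hbound.trans ?_)
  calc ENNReal.ofReal ((1 - d ^ m) * h ^ m) * μ J +
        ENNReal.ofReal (d ^ m * h ^ m) * μ {t | ENNReal.ofReal ((1 - d ^ m) * h ^ m) < g t}
      ≤ ENNReal.ofReal ((1 - d ^ m) * h ^ m) * ENNReal.ofReal h +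
        ENNReal.ofReal (d ^ m * h ^ m) * ENNReal.ofReal ((1 - d) * h) := by gcongr
    _ = ENNReal.ofReal ((1 - d ^ (m + 1)) * h ^ (m + 1)) := by
      rw [← ENNReal.ofReal_mul (mul_nonneg hdm hhm),
        ← ENNReal.ofReal_mul (mul_nonneg (pow_nonneg hd0 m) hhm),
        ← ENNReal.ofReal_add (mul_nonneg (mul_nonneg hdm hhm) hh)
          (mul_nonneg (mul_nonneg (pow_nonneg hd0 m) hhm) (by nlinarith))]
      ring_nf

lemma mem_sweepAlong_of_lt_lmarginal {E : Set (Fin n → ℝ)} (hE : MeasurableSet E) {d : ℝ}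
    (hd0 : 0 ≤ d) (hd1 : d ≤ 1) {a : Fin n → ℝ} {h : ℝ} (hh : 0 < h) {l : List (Fin n)}
    (hl : l.Nodup) {z : Fin n → ℝ} (hz : z ∈ openCube a h)
    (hlt : ENNReal.ofReal ((1 - d ^ l.length) * h ^ l.length) <
      (∫⋯∫⁻_l.toFinset, (openCube a h ∩ E).indicator 1 ∂fun _ => volume) z) :
    z ∈ sweepAlong (1 - d) l E := by
  have hf : Measurable ((openCube a h ∩ E).indicator (1 : (Fin n → ℝ) → ℝ≥0∞)) :=
    measurable_one.indicator ((measurableSet_openCube a h).inter hE)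
  induction l generalizing z with
  | nil =>
    by_contra hzE
    simp [indicator_of_notMem (fun hzQE : z ∈ openCube a h ∩ E => hzE hzQE.2)] at hlt
  | cons k l ih =>
    obtain ⟨hkl, hl⟩ := List.nodup_cons.1 hl
    have hks : k ∉ l.toFinset := List.mem_toFinset.not.2 hkl
    set J := Ioo (a k) (a k + h)
    have hgJ : ∀ t ∉ J, (∫⋯∫⁻_l.toFinset, (openCube a h ∩ E).indicator 1 ∂fun _ => volume)
        (Function.update z k t) = 0 := fun t ht =>
      lmarginal_indicator_eq_zero inter_subset_left hks (by rwa [Function.update_self])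
    rw [List.toFinset_cons, lmarginal_insert _ hf hks, List.length_cons] at hlt
    have hB := ofReal_mul_lt_measure_setOf_lt ((hf.lmarginal _).comp (measurable_update z))
      measurableSet_Ioo hd0 hd1 hh.le (by rw [Real.volume_Ioo, add_sub_cancel_left])
      (fun t => (lmarginal_indicator_le_pow hh.le inter_subset_left _ _).trans_eq
        (by rw [List.toFinset_card_of_nodup hl])) hgJ hlt
    refine ⟨a k, a k + h, hz k (mem_univ k), ?_⟩
    rw [add_sub_cancel_left]
    refine hB.trans_le (measure_mono fun t ht => ?_)
    have htJ : t ∈ J := by_contra fun htJ => by simp [hgJ t htJ] at ht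
    refine ⟨ih hl (fun i _ => ?_) ht, htJ⟩
    rcases eq_or_ne i k with rfl | hik
    · simpa [J] using htJ
    · simpa [hik] using hz i (mem_univ i)

lemma setLIntegral_indicator_one {E : Set (Fin n → ℝ)} (hE : MeasurableSet E)
    (Q : Set (Fin n → ℝ)) : ∫⁻ y in Q, E.indicator 1 y = volume (E ∩ Q) := by
  rw [lintegral_indicator_one hE, Measure.restrict_apply hE]

lemma exists_openCube_of_lt_MHLc {E : Set (Fin n → ℝ)} (hE : MeasurableSet E) {β : ℝ≥0∞}
    {x : Fin n → ℝ} (hx : β < MHLc n (E.indicator 1) x) :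
    ∃ a h, 0 < h ∧ x ∈ openCube a h ∧ β * ENNReal.ofReal (h ^ n) < volume (E ∩ openCube a h) := by
  simp only [MHLc, lt_iSup_iff] at hx
  obtain ⟨a, h, hh, hxQ, hlt⟩ := hx
  rw [setLIntegral_indicator_one hE, volume_openCube a hh.le,
    ENNReal.lt_div_iff_mul_lt (by simp [hh]) (by simp)] at hlt
  exact ⟨a, h, hh, hxQ, hlt⟩

lemma openCube_subset_sweepAlong {E : Set (Fin n → ℝ)} (hE : MeasurableSet E) {d : ℝ}
    (hd0 : 0 ≤ d) (hd1 : d ≤ 1) {a : Fin n → ℝ} {h : ℝ} (hh : 0 < h)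
    (hlt : ENNReal.ofReal ((1 - d ^ n) * h ^ n) < volume (openCube a h ∩ E)) :
    openCube a h ⊆ sweepAlong (1 - d) (List.finRange n) E := fun _ hz =>
  mem_sweepAlong_of_lt_lmarginal hE hd0 hd1 hh (List.nodup_finRange n) hz (by
    rwa [List.length_finRange, List.toFinset_finRange, lmarginal_univ,
      lintegral_indicator_one ((measurableSet_openCube a h).inter hE)])

theorem CHLc_le {d : ℝ} (hd0 : 0 ≤ d) (hd1 : d < 1) :
    CHLc n (1 - d ^ n) ≤ ENNReal.ofReal ((1 + d) / (1 - d)) ^ n := by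
  refine iSup_le fun E => iSup_le fun hE => iSup_le fun _ => iSup_le fun _ => ?_
  refine ENNReal.div_le_of_le_mul ?_
  have hsub : {x | MHLc n (E.indicator 1) x > ENNReal.ofReal (1 - d ^ n)} ⊆
      sweepAlong (1 - d) (List.finRange n) E := by
    intro x hx
    obtain ⟨a, h, hh, hxQ, hlt⟩ := exists_openCube_of_lt_MHLc hE hx
    refine openCube_subset_sweepAlong hE hd0 hd1.le hh ?_ hxQ
    rwa [ENNReal.ofReal_mul (sub_nonneg.2 (pow_le_one₀ hd0 hd1.le)), inter_comm]
  calc _ ≤ volume (sweepAlong (1 - d) (List.finRange n) E) := measure_mono hsub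
    _ ≤ ENNReal.ofReal ((2 - (1 - d)) / (1 - d)) ^ (List.finRange n).length * volume E :=
        volume_sweepAlong_le hE (by linarith) (by linarith) _
    _ = ENNReal.ofReal ((1 + d) / (1 - d)) ^ n * volume E := by
        rw [List.length_finRange]
        ring_nf

end UpperBound

section LowerBound

variable {n : ℕ}

lemma openCube_diff_subset_pi_Icc {p : Fin n → ℝ} (hp : ∑ i, p i = 0) (ε : ℝ) :
    openCube p 1 \ {x | ∑ i, x i < n - ε} ⊆ univ.pi fun i => Icc (p i + 1 - ε) (p i + 1) := by
  rintro x ⟨hxQ, hxH⟩ i -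
  have hx : ∀ j, x j ∈ Ioo (p j) (p j + 1) := fun j => hxQ j (mem_univ j)
  refine ⟨?_, (hx i).2.le⟩
  have hsum : ∑ j, (p j + 1 - x j) = n - ∑ j, x j := by
    simp [Finset.sum_add_distrib, Finset.sum_sub_distrib, hp]
  have := Finset.single_le_sum (f := fun j => p j + 1 - x j)
    (fun j _ => by linarith [(hx j).2]) (Finset.mem_univ i)
  simp only [mem_ofPred_eq, not_lt] at hxH
  linarith

lemma ofReal_one_sub_pow_le_volume_openCube_inter {p : Fin n → ℝ} (hp : ∑ i, p i = 0) {ε : ℝ}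
    (hε : 0 ≤ ε) :
    ENNReal.ofReal (1 - ε ^ n) ≤ volume (openCube p 1 ∩ {x | ∑ i, x i < n - ε}) := by
  set H := {x : Fin n → ℝ | ∑ i, x i < n - ε}
  have hcorner : volume (openCube p 1 \ H) ≤ ENNReal.ofReal (ε ^ n) := by
    refine (measure_mono (openCube_diff_subset_pi_Icc hp ε)).trans_eq ?_
    rw [volume_pi_pi]
    simp [Real.volume_Icc, ENNReal.ofReal_pow hε]
  rw [ENNReal.ofReal_sub _ (by positivity), ENNReal.ofReal_one, tsub_le_iff_right]
  calc 1 = volume (openCube p 1) := by simp [volume_openCube p zero_le_one]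
    _ ≤ volume (openCube p 1 ∩ H) + volume (openCube p 1 \ H) := measure_le_inter_add_sdiff _ _ _
    _ ≤ volume (openCube p 1 ∩ H) + ENNReal.ofReal (ε ^ n) := add_le_add le_rfl hcorner

lemma openCube_subset_superlevel {E : Set (Fin n → ℝ)} (hE : MeasurableSet E) {α : ℝ}
    {p : Fin n → ℝ} (hp : ENNReal.ofReal α < volume (E ∩ openCube p 1)) :
    openCube p 1 ⊆ {x | MHLc n (E.indicator 1) x > ENNReal.ofReal α} := fun x hx =>
  hp.trans_le (le_iSup₂_of_le p 1 (le_iSup₂_of_le one_pos hx (by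
    simp [setLIntegral_indicator_one hE, volume_openCube p zero_le_one])))

lemma exists_openCube_of_mem_sumSlab (hn : 1 ≤ n) (k : Fin n) {ε : ℝ}
    (hε1 : ε ≤ 1) {x : Fin n → ℝ} (hx : x ∈ sumSlab k 1 2 (n - ε) n) :
    ∃ p : Fin n → ℝ, (∑ i, p i = 0 ∧ ∀ i ≠ k, p i ∈ Icc 0 2) ∧ x ∈ openCube p 1 := by
  obtain ⟨hxk, hsum⟩ := hx
  set s := (n - ∑ i, x i) / n
  have hn1 : (1 : ℝ) ≤ n := by exact_mod_cast hn
  have hs0 : 0 < s := div_pos (by linarith [hsum.2]) (by linarith)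
  have hs1 : s < 1 := (div_lt_one (by linarith)).2 (by linarith [hsum.1])
  refine ⟨fun i => x i - 1 + s, ⟨?_, fun i hik => ?_⟩, fun i _ => ⟨by linarith, by linarith⟩⟩
  · simp only [Finset.sum_add_distrib, Finset.sum_sub_distrib, Finset.sum_const,
      Finset.card_univ, Fintype.card_fin, nsmul_eq_mul, s]
    field_simp
    ring
  · have := hxk i (mem_univ i)
    simp only [Function.update_of_ne hik] at this
    exact ⟨by linarith [this.1], by linarith [this.2]⟩

lemma openCube_subset_sumSlab {k : Fin n} {p : Fin n → ℝ} (hp : ∑ i, p i = 0)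
    (hpk : ∀ i ≠ k, p i ∈ Icc 0 2) : openCube p 1 ⊆ sumSlab k 0 3 0 n := by
  intro x hx
  have hx' : ∀ i, x i ∈ Ioo (p i) (p i + 1) := fun i => hx i (mem_univ i)
  refine ⟨fun i _ => ?_, ?_⟩
  · rcases eq_or_ne i k with rfl | hik
    · simp
    · simp only [Function.update_of_ne hik]
      exact ⟨by linarith [(hx' i).1, (hpk i hik).1], by linarith [(hx' i).2, (hpk i hik).2]⟩
  · have : Nonempty (Fin n) := ⟨k⟩
    constructor
    · simpa [hp] using Finset.sum_lt_sum_of_nonempty Finset.univ_nonempty fun i _ => (hx' i).1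
    · simpa [Finset.sum_add_distrib, hp] using
        Finset.sum_lt_sum_of_nonempty Finset.univ_nonempty fun i _ => (hx' i).2

lemma one_add_volume_div_le_CHLc {E G : Set (Fin n → ℝ)} (hE : MeasurableSet E)
    (hE0 : 0 < volume E) (hEfin : volume E < ⊤) (hG : MeasurableSet G) (hEG : Disjoint E G)
    {α : ℝ} (hlevel : E ∪ G ⊆ {x | MHLc n (E.indicator 1) x > ENNReal.ofReal α}) :
    1 + volume G / volume E ≤ CHLc n α :=
  calc 1 + volume G / volume E = volume (E ∪ G) / volume E := by
        rw [measure_union hEG hG, ENNReal.add_div, ENNReal.div_self hE0.ne' hEfin.ne]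
    _ ≤ volume {x | MHLc n (E.indicator 1) x > ENNReal.ofReal α} / volume E := by gcongr
    _ ≤ CHLc n α :=
        le_iSup_of_le E <| le_iSup_of_le hE <| le_iSup_of_le hE0 <| le_iSup_of_le hEfin le_rfl

theorem le_CHLc (hn : 1 ≤ n) {α ε : ℝ} (hε0 : 0 < ε) (hε1 : ε < 1) (hαε : α < 1 - ε ^ n) :
    1 + ENNReal.ofReal (ε / (n * 3 ^ (n - 1))) ≤ CHLc n α := by
  set k : Fin n := ⟨0, hn⟩
  -- Constraining the corners off the `k`-th coordinate keeps `U` bounded while still covering `G`.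
  set P := {p : Fin n → ℝ | ∑ i, p i = 0 ∧ ∀ i ≠ k, p i ∈ Icc 0 2}
  set U := ⋃ p ∈ P, openCube p 1
  set E := U ∩ {x | ∑ i, x i < n - ε}
  set G := sumSlab k 1 2 (n - ε) n
  have hE : MeasurableSet E :=
    (isOpen_biUnion fun p _ => isOpen_set_pi finite_univ fun _ _ => isOpen_Ioo).measurableSet.inter
      (measurableSet_lt (Finset.univ.measurable_sum fun i _ => measurable_pi_apply i)
        measurable_const)
  have hdense : ∀ p ∈ P, ENNReal.ofReal α < volume (E ∩ openCube p 1) := fun p hp =>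
    (ENNReal.ofReal_lt_ofReal_iff'.2 ⟨hαε, sub_pos.2 (pow_lt_one₀ hε0.le hε1 (by omega))⟩).trans_le
      ((ofReal_one_sub_pow_le_volume_openCube_inter hp.1 hε0.le).trans (measure_mono
        fun x hx => ⟨⟨mem_biUnion hp hx.1, hx.2⟩, hx.1⟩))
  have hlevel : U ∪ G ⊆ {x | MHLc n (E.indicator 1) x > ENNReal.ofReal α} := by
    refine union_subset (iUnion₂_subset fun p hp => openCube_subset_superlevel hE (hdense p hp))
      fun x hx => ?_
    obtain ⟨p, hp, hxp⟩ := exists_openCube_of_mem_sumSlab hn k hε1.le hx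
    exact openCube_subset_superlevel hE (hdense p hp) hxp
  have hGE : Disjoint E G := disjoint_left.2 fun x hxE hxG => lt_asymm hxE.2 hxG.2.1
  have hUvol : volume U ≤ ENNReal.ofReal (n * 3 ^ (n - 1)) := by
    refine (measure_mono (iUnion₂_subset fun p hp => openCube_subset_sumSlab hp.1 hp.2)).trans_eq ?_
    rw [volume_sumSlab, Fintype.card_fin, sub_zero, sub_zero, ← ENNReal.ofReal_pow (by norm_num),
      ← ENNReal.ofReal_mul (Nat.cast_nonneg n)]
  have hE0 : 0 < volume E := (zero_le.trans_lt (hdense 0 ⟨by simp, fun i _ => by simp⟩)).trans_le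
    (measure_mono inter_subset_left)
  have hEfin : volume E < ⊤ :=
    (measure_mono inter_subset_left).trans_lt (hUvol.trans_lt ENNReal.ofReal_lt_top)
  refine le_trans ?_ (one_add_volume_div_le_CHLc hE hE0 hEfin (measurableSet_sumSlab k _ _ _ _)
    hGE ((union_subset_union_left G inter_subset_left).trans hlevel))
  rw [volume_sumSlab, sub_sub_cancel, show (2 : ℝ) - 1 = 1 by norm_num, ENNReal.ofReal_one,
    one_pow, mul_one, ENNReal.ofReal_div_of_pos (by positivity)]
  gcongr
  exact (measure_mono inter_subset_left).trans hUvol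

end LowerBound

section Asymptotics

lemma one_add_div_one_sub_pow_le {d : ℝ} (hd0 : 0 ≤ d) (hd1 : d ≤ 1 / 2) {n : ℕ}
    (hnd : 8 * n * d ≤ 1) : ((1 + d) / (1 - d)) ^ n ≤ 1 + 8 * n * d := by
  have hx : |4 * n * d| ≤ 1 := by rw [abs_of_nonneg (by positivity)]; linarith
  calc ((1 + d) / (1 - d)) ^ n
      ≤ Real.exp (4 * d) ^ n := by
        gcongr
        · exact div_nonneg (by linarith) (by linarith)
        · rw [div_le_iff₀ (by linarith)]
          nlinarith [Real.add_one_le_exp (4 * d)]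
    _ = Real.exp (4 * n * d) := by rw [← Real.exp_nat_mul]; ring_nf
    _ ≤ 1 + 8 * n * d := by
        have := (abs_le.1 (Real.abs_exp_sub_one_le hx)).2
        rw [abs_of_nonneg (by positivity)] at this
        linarith

variable {n : ℕ}

theorem CHLc_le_one_add (hn : 1 ≤ n) {α : ℝ} (hα₀ : 1 - (1 / (8 * n)) ^ n < α) (hα1 : α < 1) :
    CHLc n α ≤ 1 + ENNReal.ofReal (8 * n * (1 / α - 1) ^ (n : ℝ)⁻¹) := by
  have hn0 : n ≠ 0 := by omega
  have h8n : (0 : ℝ) < 8 * n := by positivity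
  set d := (1 - α) ^ (n : ℝ)⁻¹
  have hd0 : 0 ≤ d := by positivity
  have hd : d < 1 / (8 * n) := by
    calc d < ((1 / (8 * n)) ^ n) ^ (n : ℝ)⁻¹ :=
          Real.rpow_lt_rpow (by linarith) (by linarith) (by positivity)
      _ = 1 / (8 * n) := Real.pow_rpow_inv_natCast (by positivity) hn0
  have hnd : 8 * n * d ≤ 1 := by rw [lt_div_iff₀ h8n] at hd; linarith
  have hd2 : d ≤ 1 / 2 := by
    nlinarith [(Nat.one_le_cast (α := ℝ)).2 hn]
  have hα : α = 1 - d ^ n := by rw [Real.rpow_inv_natCast_pow (by linarith) hn0]; ring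
  have hdu : d ≤ (1 / α - 1) ^ (n : ℝ)⁻¹ := by
    have hα0 : 0 < α := by
      have : (1 / (8 * (n : ℝ))) ^ n ≤ 1 := pow_le_one₀ (by positivity)
        ((div_le_one h8n).2 (by linarith [(Nat.one_le_cast (α := ℝ)).2 hn]))
      linarith
    refine Real.rpow_le_rpow (by linarith) ?_ (by positivity)
    rw [div_sub_one hα0.ne', le_div_iff₀ hα0]
    nlinarith
  calc CHLc n α ≤ ENNReal.ofReal ((1 + d) / (1 - d)) ^ n := hα ▸ CHLc_le hd0 (by linarith)
    _ = ENNReal.ofReal (((1 + d) / (1 - d)) ^ n) := by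
        rw [ENNReal.ofReal_pow (div_nonneg (by linarith) (by linarith))]
    _ ≤ ENNReal.ofReal (1 + 8 * n * d) :=
        ENNReal.ofReal_le_ofReal (one_add_div_one_sub_pow_le hd0 hd2 hnd)
    _ ≤ 1 + ENNReal.ofReal (8 * n * (1 / α - 1) ^ (n : ℝ)⁻¹) := by
        rw [ENNReal.ofReal_add zero_le_one (by positivity), ENNReal.ofReal_one]
        gcongr

theorem one_add_le_CHLc (hn : 1 ≤ n) {α : ℝ} (hα : 1 / 2 ≤ α) (hα1 : α < 1) :
    1 + ENNReal.ofReal ((4 * n * 3 ^ (n - 1) : ℝ)⁻¹ * (1 / α - 1) ^ (n : ℝ)⁻¹) ≤ CHLc n α := by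
  have hn0 : n ≠ 0 := by omega
  set ε := ((1 - α) / 2) ^ (n : ℝ)⁻¹
  have hε0 : 0 < ε := Real.rpow_pos_of_pos (by linarith) _
  have hε1 : ε < 1 := Real.rpow_lt_one (by linarith) (by linarith) (by positivity)
  have hεn : ε ^ n = (1 - α) / 2 := Real.rpow_inv_natCast_pow (by linarith) hn0
  refine le_trans ?_ (le_CHLc hn hε0 hε1 (by linarith))
  gcongr
  have hu : (1 / α - 1) ^ (n : ℝ)⁻¹ ≤ 4 * ε := by
    calc (1 / α - 1) ^ (n : ℝ)⁻¹ ≤ (4 * ((1 - α) / 2)) ^ (n : ℝ)⁻¹ := by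
          refine Real.rpow_le_rpow (sub_nonneg.2 ((le_div_iff₀ (by linarith)).2 (by linarith)))
            ?_ (by positivity)
          rw [div_sub_one (by linarith), div_le_iff₀ (by linarith)]
          nlinarith
      _ = 4 ^ (n : ℝ)⁻¹ * ε := Real.mul_rpow (by norm_num) (by linarith)
      _ ≤ 4 * ε := by
          gcongr
          exact Real.rpow_le_self_of_one_le (by norm_num)
            (inv_le_one_of_one_le₀ (by exact_mod_cast hn))
  rw [inv_mul_eq_div, div_le_div_iff₀ (by positivity) (by positivity)]
  nlinarith [mul_le_mul_of_nonneg_right hu (by positivity : (0 : ℝ) ≤ n * 3 ^ (n - 1))]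

lemma tendsto_one_add_ofReal_mul_rpow (C : ℝ) {r : ℝ} (hr : 0 < r) :
    Tendsto (fun α : ℝ => 1 + ENNReal.ofReal (C * (1 / α - 1) ^ r)) (nhdsWithin 1 (Iio 1))
      (nhds 1) := by
  have hcont : ContinuousAt (fun α : ℝ => 1 + ENNReal.ofReal (C * (1 / α - 1) ^ r)) 1 := by
    refine continuousAt_const.add (ENNReal.continuous_ofReal.continuousAt.comp
      (continuousAt_const.mul (ContinuousAt.rpow_const ?_ (Or.inr hr.le))))
    exact (continuousAt_const.div continuousAt_id one_ne_zero).sub continuousAt_const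
  simpa [Real.zero_rpow hr.ne'] using hcont.tendsto.mono_left nhdsWithin_le_nhds

end Asymptotics

end Solyanik

theorem uncentered_cube_solyanik_sharp (n : ℕ) (hn : 1 ≤ n) :
    (∃ c C : ℝ, 0 < c ∧ c ≤ C ∧ ∃ α₀ ∈ Set.Ioo (0 : ℝ) 1,
      ∀ α ∈ Set.Ioo α₀ 1,
        ENNReal.ofReal (c * (1 / α - 1) ^ ((n : ℝ)⁻¹)) ≤ CHLc n α - 1 ∧
        CHLc n α - 1 ≤ ENNReal.ofReal (C * (1 / α - 1) ^ ((n : ℝ)⁻¹))) ∧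
    Filter.Tendsto (CHLc n) (nhdsWithin 1 (Set.Iio 1)) (nhds 1) := by
  have hn1 : (1 : ℝ) ≤ n := by exact_mod_cast hn
  set α₀ : ℝ := 1 - (1 / (8 * n)) ^ n
  have hα₀ : 1 / 2 ≤ α₀ := by
    have : (1 / (8 * n : ℝ)) ^ n ≤ 1 / (8 * n) :=
      pow_le_of_le_one (by positivity) ((div_le_one (by positivity)).2 (by linarith)) (by omega)
    have : 1 / (8 * n : ℝ) ≤ 1 / 8 := one_div_le_one_div_of_le (by norm_num) (by linarith)
    linarith
  have hα₀1 : α₀ < 1 := sub_lt_self 1 (by positivity)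
  have hbounds : ∀ α ∈ Ioo α₀ 1,
      1 + ENNReal.ofReal ((4 * n * 3 ^ (n - 1) : ℝ)⁻¹ * (1 / α - 1) ^ (n : ℝ)⁻¹) ≤ CHLc n α ∧
      CHLc n α ≤ 1 + ENNReal.ofReal (8 * n * (1 / α - 1) ^ (n : ℝ)⁻¹) := fun α hα =>
    ⟨Solyanik.one_add_le_CHLc hn (hα₀.trans hα.1.le) hα.2, Solyanik.CHLc_le_one_add hn hα.1 hα.2⟩
  refine ⟨⟨_, _, by positivity, ?_, α₀, ⟨by linarith, hα₀1⟩, fun α hα =>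
    ⟨ENNReal.le_sub_of_add_le_left ENNReal.one_ne_top (hbounds α hα).1,
      tsub_le_iff_left.2 (hbounds α hα).2⟩⟩, ?_⟩
  · calc (4 * n * 3 ^ (n - 1) : ℝ)⁻¹ ≤ 1 :=
          inv_le_one_of_one_le₀ (by
            nlinarith [one_le_pow₀ (n := n - 1) (by norm_num : (1 : ℝ) ≤ 3)])
      _ ≤ 8 * n := by linarith
  · have hev : ∀ᶠ α in nhdsWithin 1 (Iio 1), α ∈ Ioo α₀ 1 := Ioo_mem_nhdsLT hα₀1
    exact tendsto_of_tendsto_of_tendsto_of_le_of_le' tendsto_const_nhds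
      (Solyanik.tendsto_one_add_ofReal_mul_rpow _ (by positivity))
      (hev.mono fun α hα => le_self_add.trans (hbounds α hα).1)
      (hev.mono fun α hα => (hbounds α hα).2)
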